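/- The function h(φ₁,φ₂) ∝ φ₁^{s₁−1/2}(1+φ₁)^{−1/2} φ₂^{s₁+s₂−1/2}(1−(1+φ₁)φ₂)^{n−s₁−s₂−1/2} is integrable over the region {φ₁>0, 0<φ₂<1/(1+φ₁)} whenever s₁, s₂ are nonnegative integers with s₁+s₂ < n and s₁ ≥ 1, s₂ ≥ 1; hence it defines a proper (normalizable) probability density. -/

import Mathlib

/-!
On the region `0 < φ₁`, `0 < φ₂ < 1/(1+φ₁)` we have `φ₁ ≤ 1 + φ₁`, `φ₂ ≤ (1+φ₁)⁻¹` and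
`1 - (1+φ₁)φ₂ ≤ 1`. Trading all but `φ₂^(s₂ - 3/4)` of the power of `φ₂` for powers of
`(1+φ₁)⁻¹` dominates the density by the product `(1+φ₁)^(-5/4) φ₂^(s₂ - 3/4)`, which is
integrable on `(0,∞) × (0,1)`. The density is positive on the nonempty open region, so its
integral is positive.
-/

open Set MeasureTheory

def trinomialRegion : Set (ℝ × ℝ) :=
  {φ | 0 < φ.1 ∧ 0 < φ.2 ∧ (1 + φ.1) * φ.2 < 1}

lemma isOpen_trinomialRegion : IsOpen trinomialRegion :=
  (isOpen_lt continuous_const continuous_fst).inter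
    ((isOpen_lt continuous_const continuous_snd).inter
      (isOpen_lt (f := fun φ : ℝ × ℝ => (1 + φ.1) * φ.2) (by fun_prop) continuous_const))

lemma trinomialRegion_nonempty : trinomialRegion.Nonempty :=
  ⟨(1, 1 / 4), by norm_num [trinomialRegion]⟩

lemma trinomialRegion_subset_Ioi_prod_Ioo : trinomialRegion ⊆ Ioi 0 ×ˢ Ioo 0 1 := by
  rintro ⟨x, y⟩ ⟨hx, hy, hxy⟩
  exact ⟨hx, hy, by nlinarith⟩

lemma integrableOn_Ioi_one_add_rpow {e : ℝ} (he : e < -1) :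
    IntegrableOn (fun x : ℝ => (1 + x) ^ e) (Ioi 0) := by
  have h := (integrable_one_add_norm (E := ℝ) (μ := volume) (r := -e)
    (by simp only [Module.finrank_self, Nat.cast_one]; linarith)).integrableOn (s := Ioi 0)
  refine h.congr_fun (fun x hx => ?_) measurableSet_Ioi
  simp only [Real.norm_of_nonneg (le_of_lt hx), neg_neg]

lemma integrableOn_one_add_rpow_mul_rpow {e t : ℝ} (he : e < -1) (ht : -1 < t) :
    IntegrableOn (fun φ : ℝ × ℝ => (1 + φ.1) ^ e * φ.2 ^ t) (Ioi 0 ×ˢ Ioo 0 1) := by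
  rw [IntegrableOn, Measure.volume_eq_prod, ← Measure.prod_restrict]
  exact (integrableOn_Ioi_one_add_rpow he).mul_prod
    ((intervalIntegral.integrableOn_Ioo_rpow_iff one_pos).2 ht)

lemma setIntegral_pos_of_isOpen {X : Type*} [TopologicalSpace X] [MeasurableSpace X]
    [OpensMeasurableSpace X] {μ : Measure X} [μ.IsOpenPosMeasure] {f : X → ℝ} {s : Set X}
    (hs : IsOpen s) (hne : s.Nonempty) (hf : IntegrableOn f s μ) (hpos : ∀ x ∈ s, 0 < f x) :
    0 < ∫ x in s, f x ∂μ := by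
  rw [setIntegral_pos_iff_support_of_nonneg_ae
    (ae_restrict_of_forall_mem hs.measurableSet fun x hx => (hpos x hx).le) hf]
  exact (hs.measure_pos μ hne).trans_le (measure_mono fun x hx => ⟨(hpos x hx).ne', hx⟩)

section DensityBounds

variable {a b c d x y : ℝ}

lemma rpow_mul_rpow_mul_rpow_mul_rpow_pos (hx : 0 < x) (hy : 0 < y) (hxy : (1 + x) * y < 1) :
    0 < x ^ a * (1 + x) ^ b * y ^ c * (1 - (1 + x) * y) ^ d := by
  have hx₁ : 0 < 1 + x := by linarith
  have hr : 0 < 1 - (1 + x) * y := by linarith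
  positivity

lemma rpow_mul_rpow_mul_rpow_mul_rpow_le {t : ℝ} (ha : 0 ≤ a) (htc : t ≤ c)
    (hd : 0 ≤ d) (hx : 0 < x) (hy : 0 < y) (hxy : (1 + x) * y < 1) :
    x ^ a * (1 + x) ^ b * y ^ c * (1 - (1 + x) * y) ^ d ≤ (1 + x) ^ (a + b - c + t) * y ^ t := by
  have hx₁ : 0 < 1 + x := by linarith
  have hy_le : y ≤ (1 + x)⁻¹ := by
    rw [← one_div, le_div_iff₀ hx₁]
    linarith
  have hy_split : y ^ c = y ^ t * y ^ (c - t) := by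
    rw [← Real.rpow_add hy, add_sub_cancel]
  calc x ^ a * (1 + x) ^ b * y ^ c * (1 - (1 + x) * y) ^ d
      ≤ (1 + x) ^ a * (1 + x) ^ b * (y ^ t * ((1 + x)⁻¹) ^ (c - t)) * 1 := by
        rw [hy_split]
        gcongr
        · linarith
        · exact Real.rpow_le_one (by nlinarith) (by nlinarith) hd
    _ = (1 + x) ^ (a + b - c + t) * y ^ t := by
        rw [show a + b - c + t = a + b + -(c - t) by ring, Real.rpow_add hx₁, Real.rpow_add hx₁,
          Real.rpow_neg hx₁.le, Real.inv_rpow hx₁.le]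
        ring

end DensityBounds

theorem trinomial_fiducial_density_integrable_general
    (n s₁ s₂ : ℕ) (hs₁ : 1 ≤ s₁) (hn : s₁ + s₂ < n)
    (h : ℝ × ℝ → ℝ)
    (hh : h = fun φ => φ.1 ^ ((s₁ : ℝ) - 1 / 2) * (1 + φ.1) ^ (-(1:ℝ) / 2) *
      φ.2 ^ ((s₁ : ℝ) + (s₂ : ℝ) - 1 / 2) *
      (1 - (1 + φ.1) * φ.2) ^ ((n : ℝ) - (s₁ : ℝ) - (s₂ : ℝ) - 1 / 2))
    (R : Set (ℝ × ℝ))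
    (hR : R = {φ : ℝ × ℝ | 0 < φ.1 ∧ 0 < φ.2 ∧ (1 + φ.1) * φ.2 < 1}) :
    IntegrableOn h R volume ∧ 0 < ∫ φ in R, h φ := by
  change R = trinomialRegion at hR
  subst hR
  have hs₁' : (1 : ℝ) ≤ s₁ := by exact_mod_cast hs₁
  have hn' : (s₁ : ℝ) + s₂ + 1 ≤ n := by exact_mod_cast hn
  have hpos : ∀ φ ∈ trinomialRegion, 0 < h φ := fun φ ⟨hx, hy, hxy⟩ => by
    rw [hh]
    exact rpow_mul_rpow_mul_rpow_mul_rpow_pos hx hy hxy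
  have hdom : IntegrableOn
      (fun φ : ℝ × ℝ => (1 + φ.1) ^ ((s₁ - 1 / 2) + -(1 : ℝ) / 2 - (s₁ + s₂ - 1 / 2) +
        (s₂ - 3 / 4)) * φ.2 ^ ((s₂ : ℝ) - 3 / 4)) trinomialRegion :=
    (integrableOn_one_add_rpow_mul_rpow (by linarith)
      (by linarith [s₂.cast_nonneg (α := ℝ)])).mono_set trinomialRegion_subset_Ioi_prod_Ioo
  have hint : IntegrableOn h trinomialRegion := by
    refine hdom.mono' (hh ▸ by fun_prop : Measurable h).aestronglyMeasurable ?_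
    filter_upwards [ae_restrict_mem isOpen_trinomialRegion.measurableSet] with φ hφ
    rw [Real.norm_of_nonneg (hpos φ hφ).le, hh]
    beta_reduce
    refine rpow_mul_rpow_mul_rpow_mul_rpow_le ?_ ?_ ?_ hφ.1 hφ.2.1 hφ.2.2 <;> linarith
  exact ⟨hint, setIntegral_pos_of_isOpen isOpen_trinomialRegion trinomialRegion_nonempty hint hpos⟩

/-- The (unnormalized) fiducial density
`h(φ₁,φ₂) = φ₁^{s₁-1/2} (1+φ₁)^{-1/2} φ₂^{s₁+s₂-1/2} (1-(1+φ₁)φ₂)^{n-s₁-s₂-1/2}`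
is integrable over `{φ₁ > 0, 0 < φ₂ < 1/(1+φ₁)}` whenever `s₁, s₂` are
nonnegative integers with `1 ≤ s₁`, `1 ≤ s₂` and `s₁ + s₂ < n`, and its
integral is positive; hence it defines a proper probability density. -/
theorem trinomial_fiducial_density_integrable
    (n s₁ s₂ : ℕ) (hs₁ : 1 ≤ s₁) (hs₂ : 1 ≤ s₂) (hn : s₁ + s₂ < n)
    (h : ℝ × ℝ → ℝ)
    (hh : h = fun φ => φ.1 ^ ((s₁ : ℝ) - 1 / 2) * (1 + φ.1) ^ (-(1:ℝ) / 2) *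
      φ.2 ^ ((s₁ : ℝ) + (s₂ : ℝ) - 1 / 2) *
      (1 - (1 + φ.1) * φ.2) ^ ((n : ℝ) - (s₁ : ℝ) - (s₂ : ℝ) - 1 / 2))
    (R : Set (ℝ × ℝ))
    (hR : R = {φ : ℝ × ℝ | 0 < φ.1 ∧ 0 < φ.2 ∧ (1 + φ.1) * φ.2 < 1}) :
    IntegrableOn h R volume ∧ 0 < ∫ φ in R, h φ :=
  trinomial_fiducial_density_integrable_general n s₁ s₂ hs₁ hn h hh R hR
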